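/- In the free group Y on two generators y and z, the elements t′_i = y^i z^i, i = 1, 2, …, freely generate a free subgroup of countably infinite rank; equivalently, the group homomorphism from the free group on a countably infinite alphabet {s_1, s_2, …} to Y sending s_i ↦ y^i z^i for every i ≥ 1 is injective. -/
import Mathlib


/-- The free group of rank 2 on the generators `y` (index 0) and `z` (index 1). -/
abbrev Ygrp : Type := FreeGroup (Fin 2)

/-- The generator `y` of `Y`. -/
def yy : Ygrp := FreeGroup.of 0

/-- The generator `z` of `Y`. -/
def zz : Ygrp := FreeGroup.of 1

/- ### Auxiliary word-level lemmas -/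

/-- Prepending a single letter to a reduced word with a non-cancelling head. -/
lemma cons_toWord {α : Type*} [DecidableEq α] (a : α) (b : Bool) (g : FreeGroup α)
    (h : g.toWord.head? ≠ some (a, !b)) :
    (FreeGroup.mk [(a, b)] * g).toWord = (a, b) :: g.toWord := by
  conv_lhs => rw [← FreeGroup.mk_toWord (x := g), FreeGroup.mul_mk, FreeGroup.toWord_mk]
  rw [List.singleton_append, FreeGroup.reduce.cons, FreeGroup.reduce_toWord]
  cases hw : g.toWord with
  | nil => rfl
  | cons hd tl =>
    simp only []
    rw [if_neg]
    rintro ⟨h1, h2⟩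
    apply h
    rw [hw, List.head?_cons]
    congr 1
    exact Prod.ext h1.symm (by simpa using h2.symm)

lemma of_mul_toWord {α : Type*} [DecidableEq α] (a : α) (g : FreeGroup α)
    (h : g.toWord.head? ≠ some (a, false)) :
    (FreeGroup.of a * g).toWord = (a, true) :: g.toWord :=
  cons_toWord a true g (by simpa using h)

lemma inv_of_mul_toWord {α : Type*} [DecidableEq α] (a : α) (g : FreeGroup α)
    (h : g.toWord.head? ≠ some (a, true)) :
    ((FreeGroup.of a)⁻¹ * g).toWord = (a, false) :: g.toWord := by
  have : (FreeGroup.of a)⁻¹ = FreeGroup.mk [(a, false)] := by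
    show (FreeGroup.mk [(a, true)])⁻¹ = _
    rw [FreeGroup.inv_mk]; rfl
  rw [this]
  exact cons_toWord a false g (by simpa using h)

/-- Multiplying by a power of `zz` on the left of a word not starting with `z⁻¹`. -/
lemma zpow_mul_toWord (k : ℕ) (g : Ygrp) (h : g.toWord.head? ≠ some (1, false)) :
    (zz ^ k * g).toWord = List.replicate k ((1 : Fin 2), true) ++ g.toWord := by
  induction k with
  | zero => simp
  | succ k ih =>
    have hhead : (zz ^ k * g).toWord.head? ≠ some (1, false) := by
      rw [ih]
      cases k with
      | zero => simpa using h
      | succ k => simp [List.replicate_succ]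
    rw [pow_succ', mul_assoc]
    show (FreeGroup.of 1 * (zz ^ k * g)).toWord = _
    rw [of_mul_toWord 1 (zz ^ k * g) hhead, ih, List.replicate_succ, List.cons_append]

lemma head_z_pow_shift {m n : ℕ} (hmn : m < n) (w : Ygrp) (b : Bool)
    (h : (zz ^ m * w).toWord.head? = some (0, b)) :
    (zz ^ n * w).toWord.head? = some (1, true) := by
  have hzw : zz ^ n * w = zz ^ (n - m) * (zz ^ m * w) := by
    rw [← mul_assoc, ← pow_add]
    congr 2
    omega
  rw [hzw, zpow_mul_toWord (n - m) _ (by rw [h]; simp)]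
  obtain ⟨k, hk⟩ : ∃ k, n - m = k + 1 := ⟨n - m - 1, by omega⟩
  rw [hk, List.replicate_succ, List.cons_append, List.head?_cons]

/- ### Ping-pong for the conjugates `c i = z^(-i) * (y z) * z^i` -/

/-- The conjugates `z^(-i) (yz) z^i`. -/
def ppc (i : ℕ) : Ygrp := (zz ^ i)⁻¹ * (yy * zz ^ (i + 1))

/-- Ping set: reduced words of the form `z^(-i) y ⋯`. -/
def ppX (i : ℕ) : Set Ygrp := {w | (zz ^ i * w).toWord.head? = some (0, true)}

/-- Pong set: reduced words of the form `z^(-(i+1)) y⁻¹ ⋯`. -/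
def ppY (i : ℕ) : Set Ygrp := {w | (zz ^ (i + 1) * w).toWord.head? = some (0, false)}

lemma ppc_injective : Function.Injective ⇑(FreeGroup.lift ppc) := by
  apply FreeGroup.injective_lift_of_ping_pong ppc ppX ppY
  · -- nonempty
    intro i
    refine ⟨(zz ^ i)⁻¹ * yy, ?_⟩
    show (zz ^ i * ((zz ^ i)⁻¹ * yy)).toWord.head? = some (0, true)
    rw [mul_inv_cancel_left, yy, FreeGroup.toWord_of, List.head?_cons]
  · -- X pairwise disjoint
    intro i j hij
    apply Set.disjoint_left.mpr
    intro w hwi hwj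
    rcases hij.lt_or_gt with h | h
    · have := head_z_pow_shift h w true hwi
      rw [hwj] at this
      simp at this
    · have := head_z_pow_shift h w true hwj
      rw [hwi] at this
      simp at this
  · -- Y pairwise disjoint
    intro i j hij
    apply Set.disjoint_left.mpr
    intro w hwi hwj
    rcases hij.lt_or_gt with h | h
    · have := head_z_pow_shift (by omega : i + 1 < j + 1) w false hwi
      rw [hwj] at this
      simp at this
    · have := head_z_pow_shift (by omega : j + 1 < i + 1) w false hwj
      rw [hwi] at this
      simp at this
  · -- X and Y disjoint
    intro i j
    apply Set.disjoint_left.mpr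
    intro w hwi hwj
    rcases lt_trichotomy i (j + 1) with h | h | h
    · have := head_z_pow_shift h w true hwi
      rw [hwj] at this
      simp at this
    · subst h
      exact absurd (hwi.symm.trans hwj) (by simp)
    · have := head_z_pow_shift h w false hwj
      rw [hwi] at this
      simp at this
  · -- ping
    intro i x hx
    rw [Set.mem_smul_set] at hx
    obtain ⟨w, hw, rfl⟩ := hx
    rw [Set.mem_compl_iff] at hw
    show (zz ^ i * (ppc i • w)).toWord.head? = some (0, true)
    have hrw : zz ^ i * (ppc i • w) = yy * (zz ^ (i + 1) * w) := by
      rw [smul_eq_mul, ppc]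
      group
    rw [hrw, yy, of_mul_toWord 0 (zz ^ (i + 1) * w) hw, List.head?_cons]
  · -- pong
    intro i x hx
    rw [Pi.inv_apply, Set.mem_smul_set] at hx
    obtain ⟨w, hw, rfl⟩ := hx
    rw [Set.mem_compl_iff] at hw
    show (zz ^ (i + 1) * ((ppc i)⁻¹ • w)).toWord.head? = some (0, false)
    have hrw : zz ^ (i + 1) * ((ppc i)⁻¹ • w) = yy⁻¹ * (zz ^ i * w) := by
      rw [smul_eq_mul, ppc]
      group
    rw [hrw, yy, inv_of_mul_toWord 0 (zz ^ i * w) hw, List.head?_cons]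

/- ### Nielsen transformation relating `y^(i+1) z^(i+1)` to the conjugates -/

/-- `s_i ↦ s_0 s_1 ⋯ s_i`. -/
def nprod : ℕ → FreeGroup ℕ
  | 0 => FreeGroup.of 0
  | i + 1 => nprod i * FreeGroup.of (i + 1)

/-- `s_0 ↦ s_0`, `s_{i+1} ↦ s_i⁻¹ s_{i+1}`. -/
def ndiff : ℕ → FreeGroup ℕ
  | 0 => FreeGroup.of 0
  | i + 1 => (FreeGroup.of i)⁻¹ * FreeGroup.of (i + 1)

/-- In the free group `Y = ⟨y, z⟩`, the elements `t′_i = y^i z^i`, `i = 1, 2, …`, freely generate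
a free subgroup of countably infinite rank: the homomorphism from the free group on the countably
infinite alphabet `{s_1, s_2, …}` (indexed by `ℕ`, index `i` corresponding to `s_{i+1}`) to `Y`
sending `s_i ↦ y^i z^i` is injective. -/
theorem yz_words_free :
    Function.Injective
      ⇑(FreeGroup.lift fun i : ℕ => yy ^ (i + 1) * zz ^ (i + 1)) := by
  set T : ℕ → Ygrp := fun i : ℕ => yy ^ (i + 1) * zz ^ (i + 1) with hT
  set φ : FreeGroup ℕ →* FreeGroup ℕ := FreeGroup.lift ndiff with hφ
  set ψ : FreeGroup ℕ →* FreeGroup ℕ := FreeGroup.lift nprod with hψ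
  have hφψ : φ.comp ψ = MonoidHom.id _ := by
    apply FreeGroup.ext_hom
    intro i
    simp only [MonoidHom.comp_apply, MonoidHom.id_apply, hψ, FreeGroup.lift_apply_of]
    induction i with
    | zero => simp [nprod, hφ, ndiff]
    | succ i ih =>
      rw [nprod, map_mul, ih, hφ, FreeGroup.lift_apply_of]
      show FreeGroup.of i * ndiff (i + 1) = _
      rw [ndiff, mul_inv_cancel_left]
  have hkey : (FreeGroup.lift T).comp φ = FreeGroup.lift ppc := by
    apply FreeGroup.ext_hom
    intro i
    simp only [MonoidHom.comp_apply, hφ, FreeGroup.lift_apply_of]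
    cases i with
    | zero =>
      show FreeGroup.lift T (FreeGroup.of 0) = ppc 0
      rw [FreeGroup.lift_apply_of, hT, ppc]
      group
    | succ i =>
      show FreeGroup.lift T ((FreeGroup.of i)⁻¹ * FreeGroup.of (i + 1)) = ppc (i + 1)
      rw [map_mul, map_inv, FreeGroup.lift_apply_of, FreeGroup.lift_apply_of, hT, ppc]
      group
  intro x y hxy
  have h1 : ∀ u : FreeGroup ℕ, FreeGroup.lift T u = FreeGroup.lift ppc (ψ u) := by
    intro u
    conv_lhs => rw [show u = φ (ψ u) by
      simpa using (DFunLike.congr_fun hφψ u).symm]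
    rw [← MonoidHom.comp_apply, hkey]
  rw [h1 x, h1 y] at hxy
  have h2 : ψ x = ψ y := ppc_injective hxy
  have h3 : ∀ u : FreeGroup ℕ, φ (ψ u) = u := by
    intro u
    simpa using DFunLike.congr_fun hφψ u
  rw [← h3 x, ← h3 y, h2]
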